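/- arXiv:1703.07838 — 4 statements merged into one kernel-verified Lean document; each statement's English description precedes it below -/
import Mathlib

section
/- For every integer k ≥ 0, the function x ↦ c_k(x) is continuous on the interval [1, ∞). -/
noncomputable section

/-- The standard symplectic form `ω₀ = Σ dxⱼ ∧ dyⱼ` on `ℝ²ⁿ ≅ ℂⁿ`,
identified via `z_j = x_j + i y_j`; on tangent vectors `u v : Fin n → ℂ` it is
`Σⱼ Im(conj (u j) * v j) = Σⱼ (uⱼ.re * vⱼ.im - uⱼ.im * vⱼ.re)`. -/
def omega0 {n : ℕ} (u v : Fin n → ℂ) : ℝ :=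
  ∑ j, ((starRingEnd ℂ) (u j) * v j).im

/-- `U ↪ V`: there is a smooth injective map `f` defined on an open neighbourhood `W` of `U`
with `f(U) ⊆ V`, whose derivative preserves `ω₀`. -/
def SympEmb {n : ℕ} (U V : Set (Fin n → ℂ)) : Prop :=
  ∃ (W : Set (Fin n → ℂ)) (f : (Fin n → ℂ) → (Fin n → ℂ)),
    IsOpen W ∧ U ⊆ W ∧ ContDiffOn ℝ (⊤ : ℕ∞) f W ∧ Set.InjOn f W ∧ f '' U ⊆ V ∧
    ∀ p ∈ W, ∀ u v : Fin n → ℂ,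
      omega0 (fderiv ℝ f p u) (fderiv ℝ f p v) = omega0 u v

/-- `E(a,b) × ℝ^{2k} ⊆ ℝ^{4+2k} ≅ ℂ^{k+2}`: the set of `z` with
`π(|z₀|²/a + |z₁|²/b) ≤ 1`, with no constraint on the remaining `k` complex coordinates.
For `k = 0` this is the ellipsoid `E(a,b) ⊂ ℂ²`, and `stabEll μ μ k` is `B⁴(μ) × ℝ^{2k}`. -/
def stabEll (a b : ℝ) (k : ℕ) : Set (Fin (k + 2) → ℂ) :=
  {z | Real.pi * (‖z 0‖ ^ 2 / a + ‖z 1‖ ^ 2 / b) ≤ 1}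

/-- `c_k(x) = inf {μ > 0 : E(1,x) × ℝ^{2k} ↪ B⁴(μ) × ℝ^{2k}}`. -/
def ck (k : ℕ) (x : ℝ) : ℝ :=
  sInf {μ : ℝ | 0 < μ ∧ SympEmb (stabEll 1 x k) (stabEll μ μ k)}

end

open Set

/-! ### Auxiliary lemmas -/

lemma omega0_smul (c : ℝ) {n : ℕ} (u v : Fin n → ℂ) :
    omega0 ((c : ℂ) • u) ((c : ℂ) • v) = c ^ 2 * omega0 u v := by
  unfold omega0
  rw [Finset.mul_sum]
  refine Finset.sum_congr rfl fun j _ => ?_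
  have h : (starRingEnd ℂ) ((c : ℂ) * u j) * ((c : ℂ) * v j)
      = ((c ^ 2 : ℝ) : ℂ) * ((starRingEnd ℂ) (u j) * v j) := by
    rw [map_mul, Complex.conj_ofReal]
    push_cast
    ring
  simp only [Pi.smul_apply, smul_eq_mul, h, Complex.mul_im, Complex.ofReal_re,
    Complex.ofReal_im]
  ring

lemma sympEmb_mono {n : ℕ} {U' U V : Set (Fin n → ℂ)} (h : U' ⊆ U) :
    SympEmb U V → SympEmb U' V := by
  rintro ⟨W, f, hW, hUW, hsm, hinj, himg, hom⟩
  exact ⟨W, f, hW, h.trans hUW, hsm, hinj, (Set.image_mono (f := f) h).trans himg, hom⟩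

lemma sympEmb_of_subset {n : ℕ} {U V : Set (Fin n → ℂ)} (h : U ⊆ V) : SympEmb U V := by
  refine ⟨univ, id, isOpen_univ, subset_univ _, contDiffOn_id, injOn_id _, by simpa using h, ?_⟩
  intro p _ u v
  simp [fderiv_id]

lemma stabEll_mono {k : ℕ} {a a' b b' : ℝ} (ha : 0 < a) (hb : 0 < b)
    (haa : a ≤ a') (hbb : b ≤ b') : stabEll a b k ⊆ stabEll a' b' k := by
  intro z hz
  simp only [stabEll, mem_setOf_eq] at hz ⊢
  have h : ‖z 0‖ ^ 2 / a' + ‖z 1‖ ^ 2 / b' ≤ ‖z 0‖ ^ 2 / a + ‖z 1‖ ^ 2 / b := by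
    gcongr <;> positivity
  nlinarith [Real.pi_pos]

lemma mem_stabEll_scale {k : ℕ} {a b c : ℝ} (hc : c ≠ 0) (z : Fin (k + 2) → ℂ) :
    z ∈ stabEll (c ^ 2 * a) (c ^ 2 * b) k ↔ ((c : ℂ)⁻¹ • z) ∈ stabEll a b k := by
  have h1 : ∀ w : ℂ, ∀ d : ℝ, ‖(c : ℂ)⁻¹ • w‖ ^ 2 / d = ‖w‖ ^ 2 / (c ^ 2 * d) := by
    intro w d
    rw [norm_smul, norm_inv, Complex.norm_real, Real.norm_eq_abs, mul_pow, inv_pow,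
      sq_abs, inv_mul_eq_div, div_div]
  simp only [stabEll, mem_setOf_eq, Pi.smul_apply, h1]

lemma sympEmb_scale {k : ℕ} {a b μ : ℝ} {c : ℝ} (hc : 0 < c)
    (h : SympEmb (stabEll a b k) (stabEll μ μ k)) :
    SympEmb (stabEll (c ^ 2 * a) (c ^ 2 * b) k) (stabEll (c ^ 2 * μ) (c ^ 2 * μ) k) := by
  obtain ⟨W, f, hW, hUW, hsm, hinj, himg, hom⟩ := h
  have hc0 : (c : ℂ) ≠ 0 := by exact_mod_cast hc.ne'
  have hc0' : ((c : ℂ)⁻¹) ≠ 0 := inv_ne_zero hc0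
  set B : (Fin (k + 2) → ℂ) →L[ℝ] (Fin (k + 2) → ℂ) :=
    ((c : ℂ)⁻¹) • ContinuousLinearMap.id ℝ (Fin (k + 2) → ℂ) with hB
  set A : (Fin (k + 2) → ℂ) →L[ℝ] (Fin (k + 2) → ℂ) :=
    ((c : ℂ)) • ContinuousLinearMap.id ℝ (Fin (k + 2) → ℂ) with hA
  have hBapp : ∀ z, B z = (c : ℂ)⁻¹ • z := fun z => rfl
  have hAapp : ∀ z, A z = (c : ℂ) • z := fun z => rfl
  refine ⟨⇑B ⁻¹' W, fun z => A (f (B z)), hW.preimage B.continuous, ?_, ?_, ?_, ?_, ?_⟩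
  · intro z hz
    have := (mem_stabEll_scale hc.ne' z).mp hz
    simpa [hBapp] using hUW this
  · exact A.contDiff.comp_contDiffOn
      (hsm.comp B.contDiff.contDiffOn (fun z hz => hz))
  · intro p₁ h₁ p₂ h₂ heq
    have hAinj : Function.Injective A := by
      intro x y hxy
      have := smul_right_injective (Fin (k + 2) → ℂ) hc0 (by simpa [hAapp] using hxy)
      exact this
    have h3 : f (B p₁) = f (B p₂) := hAinj heq
    have h4 : B p₁ = B p₂ := hinj h₁ h₂ h3
    have : (c : ℂ)⁻¹ • p₁ = (c : ℂ)⁻¹ • p₂ := by simpa [hBapp] using h4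
    exact smul_right_injective (Fin (k + 2) → ℂ) hc0' this
  · rintro _ ⟨z, hz, rfl⟩
    have h1 : B z ∈ stabEll a b k := by
      simpa [hBapp] using (mem_stabEll_scale hc.ne' z).mp hz
    have h2 : f (B z) ∈ stabEll μ μ k := himg ⟨B z, h1, rfl⟩
    rw [mem_stabEll_scale hc.ne']
    show (c : ℂ)⁻¹ • A (f (B z)) ∈ stabEll μ μ k
    rw [hAapp, inv_smul_smul₀ hc0]
    exact h2
  · intro p hp u v
    have hq : B p ∈ W := hp
    have hfd : DifferentiableAt ℝ f (B p) :=
      (hsm.contDiffAt (hW.mem_nhds hq)).differentiableAt (by simp)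
    have hg : HasFDerivAt (fun z => A (f (B z)))
        (A.comp ((fderiv ℝ f (B p)).comp B)) p := by
      exact A.hasFDerivAt.comp p (hfd.hasFDerivAt.comp p B.hasFDerivAt)
    rw [hg.fderiv]
    simp only [ContinuousLinearMap.coe_comp', Function.comp_apply]
    have hcinv : ((c : ℂ)⁻¹) = ((c⁻¹ : ℝ) : ℂ) := by push_cast; ring
    simp only [hAapp]
    rw [omega0_smul, hom (B p) hq (B u) (B v)]
    simp only [hBapp, hcinv]
    rw [omega0_smul]
    have hcc : c ^ 2 * c⁻¹ ^ 2 = 1 := by field_simp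
    rw [← mul_assoc, hcc, one_mul]

/-- The defining set for `ck`. -/
private def ckSet (k : ℕ) (x : ℝ) : Set ℝ :=
  {μ : ℝ | 0 < μ ∧ SympEmb (stabEll 1 x k) (stabEll μ μ k)}

private lemma ck_eq (k : ℕ) (x : ℝ) : ck k x = sInf (ckSet k x) := rfl

private lemma ckSet_bddBelow (k : ℕ) (x : ℝ) : BddBelow (ckSet k x) :=
  ⟨0, fun μ hμ => hμ.1.le⟩

private lemma mem_ckSet_self {k : ℕ} {x : ℝ} (hx : 1 ≤ x) : x ∈ ckSet k x := by
  refine ⟨by linarith, sympEmb_of_subset (stabEll_mono one_pos (by linarith) hx le_rfl)⟩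

private lemma ckSet_nonempty {k : ℕ} {x : ℝ} (hx : 1 ≤ x) : (ckSet k x).Nonempty :=
  ⟨x, mem_ckSet_self hx⟩

private lemma ck_nonneg {k : ℕ} {x : ℝ} : 0 ≤ ck k x :=
  Real.sInf_nonneg (fun μ hμ => hμ.1.le)

private lemma ck_le_self {k : ℕ} {x : ℝ} (hx : 1 ≤ x) : ck k x ≤ x :=
  csInf_le (ckSet_bddBelow k x) (mem_ckSet_self hx)

private lemma ck_mono {k : ℕ} {x y : ℝ} (hx : 1 ≤ x) (hxy : x ≤ y) :
    ck k x ≤ ck k y := by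
  refine csInf_le_csInf (ckSet_bddBelow k x) (ckSet_nonempty (by linarith)) ?_
  intro μ hμ
  exact ⟨hμ.1, sympEmb_mono (stabEll_mono one_pos (by linarith) le_rfl hxy) hμ.2⟩

private lemma mem_ckSet_scale {k : ℕ} {x l μ : ℝ} (hx : 1 ≤ x) (hl : 1 ≤ l)
    (hμ : μ ∈ ckSet k x) : l * μ ∈ ckSet k (l * x) := by
  have hl0 : 0 < l := by linarith
  have hμ0 : 0 < μ := hμ.1
  have hc : 0 < Real.sqrt l := Real.sqrt_pos.mpr hl0
  have hsq : Real.sqrt l ^ 2 = l := Real.sq_sqrt hl0.le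
  have h := sympEmb_scale (a := 1) (b := x) (μ := μ) hc hμ.2
  rw [hsq, mul_one] at h
  refine ⟨by positivity, sympEmb_mono ?_ h⟩
  exact stabEll_mono one_pos (by nlinarith) hl le_rfl

private lemma ck_scale {k : ℕ} {x l : ℝ} (hx : 1 ≤ x) (hl : 1 ≤ l) :
    ck k (l * x) ≤ l * ck k x := by
  have hl0 : 0 < l := by linarith
  have hne : (ckSet k x).Nonempty := ckSet_nonempty hx
  have h : ∀ μ ∈ ckSet k x, ck k (l * x) ≤ l * μ := fun μ hμ =>
    csInf_le (ckSet_bddBelow k (l * x)) (mem_ckSet_scale hx hl hμ)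
  have h2 : ck k (l * x) / l ≤ ck k x := by
    refine le_csInf hne fun μ hμ => ?_
    rw [div_le_iff₀ hl0, mul_comm μ l]
    exact h μ hμ
  calc ck k (l * x) = ck k (l * x) / l * l := by field_simp
    _ ≤ ck k x * l := by exact mul_le_mul_of_nonneg_right h2 hl0.le
    _ = l * ck k x := mul_comm _ _

private lemma ck_lip {k : ℕ} {x y : ℝ} (hx : 1 ≤ x) (hxy : x ≤ y) :
    ck k y ≤ ck k x + (y - x) := by
  have hx0 : 0 < x := by linarith
  have hl : 1 ≤ y / x := (one_le_div hx0).mpr hxy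
  have h := ck_scale (k := k) hx hl
  rw [div_mul_cancel₀ _ hx0.ne'] at h
  have hcx : ck k x ≤ x := ck_le_self hx
  have h0 : (0 : ℝ) ≤ ck k x := ck_nonneg
  -- from h : ck k y ≤ (y/x) * ck k x
  have h1 : x * ck k y ≤ y * ck k x := by
    have := mul_le_mul_of_nonneg_left h hx0.le
    calc x * ck k y ≤ x * (y / x * ck k x) := this
      _ = y * ck k x := by field_simp
  nlinarith [mul_nonneg (sub_nonneg.mpr hxy) (sub_nonneg.mpr hcx)]

/-- For every integer `k ≥ 0`, `x ↦ c_k(x)` is continuous on `[1,∞)`. -/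
theorem ck_continuousOn (k : ℕ) : ContinuousOn (ck k) (Set.Ici (1 : ℝ)) := by
  have lip : LipschitzOnWith 1 (ck k) (Set.Ici (1 : ℝ)) := by
    apply LipschitzOnWith.of_dist_le_mul
    intro x hx y hy
    simp only [mem_Ici] at hx hy
    rw [NNReal.coe_one, one_mul, Real.dist_eq, Real.dist_eq]
    rcases le_total x y with hxy | hxy
    · have h1 := ck_mono (k := k) hx hxy
      have h2 := ck_lip (k := k) hx hxy
      rw [abs_of_nonpos (by linarith), abs_of_nonpos (by linarith)]
      linarith
    · have h1 := ck_mono (k := k) hy hxy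
      have h2 := ck_lip (k := k) hy hxy
      rw [abs_of_nonneg (by linarith), abs_of_nonneg (by linarith)]
      linarith
  exact lip.continuousOn
end

section
/- Let p and q be positive integers with p > q, gcd(p,q) = 1 and 3 ∣ p+q. Then there exists ε₀ > 0 such that for every real number x with p/q < x < p/q + ε₀: (i) ⌈p/x⌉ = q, so that 3·((p+q)/3) = p + ⌈p/x⌉; and (ii) there is no decomposition of ((p+q)/3, p) relative to x. -/
/-- A decomposition of `(m, t)` relative to `x`: an integer `n ≥ 2` together with
positive integers `m₁,…,mₙ` and `t₁,…,tₙ` satisfying `Σ mᵢ = m`, `Σ tᵢ = t`, and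
`3mᵢ = tᵢ + ⌈tᵢ/x⌉` for every `i`. -/
def HasDecomposition (m t : ℕ) (x : ℝ) : Prop :=
  ∃ n : ℕ, 2 ≤ n ∧ ∃ ms ts : Fin n → ℕ,
    (∀ i, 0 < ms i) ∧ (∀ i, 0 < ts i) ∧
    (∑ i, ms i = m) ∧ (∑ i, ts i = t) ∧
    ∀ i, (3 * ms i : ℤ) = (ts i : ℤ) + ⌈(ts i : ℝ) / x⌉

/-- If `p > q ≥ 1`, `gcd(p,q) = 1` and `3 ∣ p+q`, then for all `x` slightly greater
than `p/q`: (i) `⌈p/x⌉ = q`, so that `3·((p+q)/3) = p + ⌈p/x⌉`, and (ii) there is no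
decomposition of `((p+q)/3, p)` relative to `x`. -/
theorem stab_triple_coprime (p q : ℕ) (hq : 0 < q) (hpq : q < p)
    (hgcd : Nat.gcd p q = 1) (hdvd : 3 ∣ p + q) :
    ∃ ε₀ > (0 : ℝ), ∀ x : ℝ, (p : ℝ) / q < x → x < (p : ℝ) / q + ε₀ →
      (⌈(p : ℝ) / x⌉ = (q : ℤ) ∧
        (3 * ((p + q) / 3 : ℕ) : ℤ) = (p : ℤ) + ⌈(p : ℝ) / x⌉) ∧
      ¬ HasDecomposition ((p + q) / 3) p x := by
  have hp : 0 < p := hq.trans hpq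
  have hpR : (0:ℝ) < p := by exact_mod_cast hp
  have hqR : (0:ℝ) < q := by exact_mod_cast hq
  have hPpos : (0:ℝ) < (p:ℝ)/q := div_pos hpR hqR
  set c : ℕ → ℤ := fun t => ⌈(t:ℝ) * q / p⌉ with hc
  set δ : ℕ → ℝ := fun t =>
    if 2 ≤ c t then (t:ℝ)/((c t : ℝ) - 1) - (p:ℝ)/q else 1 with hδ
  have hδpos : ∀ t, 1 ≤ t → 0 < δ t := by
    intro t h1
    have htR : (0:ℝ) < t := by exact_mod_cast h1
    simp only [hδ]
    split_ifs with h
    · have h2R : (2:ℝ) ≤ (c t : ℝ) := by exact_mod_cast h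
      have hlt : (c t : ℝ) - 1 < (t:ℝ) * q / p := by
        have := Int.ceil_lt_add_one ((t:ℝ) * q / p)
        simp only [hc] at *
        linarith
      have key : (p:ℝ)/q < (t:ℝ)/((c t:ℝ)-1) := by
        have h2' : (t:ℝ)/((t:ℝ)*q/p) < (t:ℝ)/((c t:ℝ)-1) :=
          div_lt_div_of_pos_left htR (by linarith) hlt
        have heq : (t:ℝ)/((t:ℝ)*q/p) = (p:ℝ)/q := by
          field_simp
        linarith
      linarith
    · norm_num
  have hne : (Finset.Icc 1 p).Nonempty := ⟨1, Finset.mem_Icc.mpr ⟨le_refl 1, hp⟩⟩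
  refine ⟨(Finset.Icc 1 p).inf' hne δ, ?_, ?_⟩
  · exact (Finset.lt_inf'_iff hne).mpr fun t ht => hδpos t (Finset.mem_Icc.mp ht).1
  intro x hx1 hx2
  have hx0 : 0 < x := hPpos.trans hx1
  set ε₀ := (Finset.Icc 1 p).inf' hne δ with hε₀
  -- key ceiling computation
  have key : ∀ t : ℕ, 1 ≤ t → t ≤ p → ⌈(t:ℝ)/x⌉ = c t := by
    intro t h1 h2
    have htR : (0:ℝ) < t := by exact_mod_cast h1
    have hεle : ε₀ ≤ δ t := Finset.inf'_le δ (Finset.mem_Icc.mpr ⟨h1, h2⟩)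
    rw [Int.ceil_eq_iff]
    constructor
    · -- c t - 1 < t/x
      by_cases h : 2 ≤ c t
      · have hxlt : x < (t:ℝ)/((c t : ℝ) - 1) := by
          have : δ t = (t:ℝ)/((c t : ℝ) - 1) - (p:ℝ)/q := by simp only [hδ, if_pos h]
          linarith
        have h2R : (2:ℝ) ≤ (c t : ℝ) := by exact_mod_cast h
        rw [lt_div_iff₀ hx0]
        calc ((c t : ℝ) - 1) * x < ((c t : ℝ) - 1) * ((t:ℝ)/((c t : ℝ) - 1)) := by
              apply mul_lt_mul_of_pos_left hxlt; linarith
          _ = t := by rw [mul_comm]; exact div_mul_cancel₀ _ (by linarith)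
      · have h1R : (c t : ℝ) ≤ 1 := by exact_mod_cast (by omega : c t ≤ 1)
        have : (0:ℝ) < t/x := div_pos htR hx0
        linarith
    · -- t/x ≤ c t
      have h1' : (t:ℝ)/x < (t:ℝ)/((p:ℝ)/q) := div_lt_div_of_pos_left htR hPpos hx1
      have h2' : (t:ℝ)/((p:ℝ)/q) = (t:ℝ)*q/p := by field_simp
      have h3' : (t:ℝ)*q/p ≤ (c t : ℝ) := Int.le_ceil _
      linarith
  have hm3 : 3 * ((p + q) / 3) = p + q := Nat.mul_div_cancel' hdvd
  have hm3' : (3 * ((p + q) / 3 : ℕ) : ℤ) = (p:ℤ) + q := by exact_mod_cast hm3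
  have hceilp : ⌈(p:ℝ)/x⌉ = (q:ℤ) := by
    rw [key p hp (le_refl p)]
    simp only [hc]
    rw [show (p:ℝ)*q/p = (q:ℝ) by field_simp]
    exact Int.ceil_natCast q
  refine ⟨⟨hceilp, by rw [hceilp]; exact hm3'⟩, ?_⟩
  rintro ⟨n, hn, ms, ts, hms, hts, hsm, hst, heq⟩
  have htslt : ∀ i, ts i < p := by
    intro i
    have hcard : 1 < (Finset.univ : Finset (Fin n)).card := by
      simpa using (by omega : 1 < n)
    obtain ⟨j, hj, hji⟩ := Finset.exists_mem_ne hcard i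
    calc ts i < ∑ k, ts k :=
          Finset.single_lt_sum hji (Finset.mem_univ i) (Finset.mem_univ j) (hts j)
            (fun k _ _ => Nat.zero_le _)
      _ = p := hst
  have hceil : ∀ i, ⌈(ts i : ℝ)/x⌉ = c (ts i) :=
    fun i => key (ts i) (hts i) (le_of_lt (htslt i))
  have h3 : ∑ i, (ts i : ℤ) = (p:ℤ) := by exact_mod_cast hst
  have hsumz : ∑ i, c (ts i) = (q:ℤ) := by
    have h1 : ∑ i, (3 * (ms i : ℤ)) = ∑ i, ((ts i : ℤ) + c (ts i)) := by
      refine Finset.sum_congr rfl fun i _ => ?_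
      rw [← hceil i]; exact heq i
    rw [Finset.sum_add_distrib, ← Finset.mul_sum] at h1
    have h2 : ∑ i, (ms i : ℤ) = (((p + q) / 3 : ℕ) : ℤ) := by exact_mod_cast hsm
    rw [h2, h3] at h1
    have : (3:ℤ) * (((p + q) / 3 : ℕ) : ℤ) = (p:ℤ) + q := hm3'
    linarith
  have hbound : ∀ i, (ts i : ℤ) * q + 1 ≤ (p:ℤ) * c (ts i) := by
    intro i
    have hle : (ts i : ℤ) * q ≤ (p:ℤ) * c (ts i) := by
      have hr : ((ts i : ℝ) * q / p) ≤ (c (ts i) : ℝ) := Int.le_ceil _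
      rw [div_le_iff₀ hpR] at hr
      have : ((ts i : ℝ)) * q ≤ (p:ℝ) * (c (ts i) : ℝ) := by linarith
      exact_mod_cast this
    rcases lt_or_eq_of_le hle with h | h
    · omega
    · exfalso
      have hdvd' : (p:ℤ) ∣ (ts i : ℤ) * (q:ℤ) := ⟨c (ts i), h⟩
      have hdvdn : p ∣ ts i * q := by exact_mod_cast hdvd'
      have hco : Nat.Coprime p q := hgcd
      have hdt : p ∣ ts i := hco.dvd_of_dvd_mul_right hdvdn
      have := Nat.le_of_dvd (hts i) hdt
      have := htslt i
      omega
  have hsum2 : ∑ i, ((ts i : ℤ) * q + 1) ≤ ∑ i, (p:ℤ) * c (ts i) :=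
    Finset.sum_le_sum fun i _ => hbound i
  rw [Finset.sum_add_distrib, ← Finset.sum_mul, ← Finset.mul_sum, hsumz, h3] at hsum2
  simp only [Finset.sum_const, Finset.card_univ, Fintype.card_fin, nsmul_eq_mul, mul_one] at hsum2
  have hn' : (2:ℤ) ≤ (n:ℤ) := by exact_mod_cast hn
  linarith
end

section
/- Let p and q be positive integers with p > q, gcd(p,q) = 1 and gcd(3, p+q) = 1. Then there exists ε₀ > 0 such that for every real number x with p/q < x < p/q + ε₀: (i) ⌈3p/x⌉ = 3q, so that 3(p+q) = 3p + ⌈3p/x⌉; and (ii) there is no decomposition of (p+q, 3p) relative to x. -/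
lemma ceil_div_eq_aux (p q t : ℕ) (hp : 0 < p) (hq : 0 < q) {x : ℝ}
    (hx1 : (p:ℝ)/q < x) (hx2 : x * (3*p*q - 1) < 3*p^2) (ht : 0 < t) (ht3 : t ≤ 3*p) :
    ⌈(t:ℝ)/x⌉ = ⌈(t:ℝ)*q/p⌉ := by
  have hp' : (0:ℝ) < p := by exact_mod_cast hp
  have hq' : (0:ℝ) < q := by exact_mod_cast hq
  have ht' : (1:ℝ) ≤ t := by exact_mod_cast ht
  have ht3' : (t:ℝ) ≤ 3*p := by exact_mod_cast ht3
  have hx0 : 0 < x := lt_trans (div_pos hp' hq') hx1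
  have hpx : (p:ℝ) < q * x := by
    have := (div_lt_iff₀ hq').mp hx1
    linarith
  have key1 : (t:ℝ)/x < (t:ℝ)*q/p := by
    rw [div_lt_div_iff₀ hx0 hp']
    nlinarith [mul_lt_mul_of_pos_left hpx (by linarith : (0:ℝ) < t)]
  set c : ℤ := ⌈(t:ℝ)*q/p⌉ with hc
  have hup : ⌈(t:ℝ)/x⌉ ≤ c := Int.ceil_le.mpr (le_trans key1.le (Int.le_ceil _))
  -- lower bound
  have h1 : (c:ℝ) < (t:ℝ)*q/p + 1 := Int.ceil_lt_add_one _
  have h2 : (p:ℝ) * (c - 1) < t * q := by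
    have := (lt_div_iff₀ hp').mp (by linarith : (c:ℝ) - 1 < (t:ℝ)*q/p)
    linarith
  have h2' : (p:ℤ) * (c - 1) < t * q := by exact_mod_cast h2
  have h3 : (p:ℤ) * (c - 1) ≤ t * q - 1 := by omega
  have h3' : (p:ℝ) * (c - 1) ≤ (t:ℝ) * q - 1 := by exact_mod_cast h3
  have htq1 : (1:ℝ) ≤ (t:ℝ)*q := by
    have h1n : 1 ≤ t*q := Nat.mul_pos ht hq
    exact_mod_cast h1n
  have hpq1 : (1:ℝ) ≤ (p:ℝ)*q := by
    have h1n : 1 ≤ p*q := Nat.mul_pos hp hq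
    exact_mod_cast h1n
  have h3pq : (0:ℝ) < 3*(p:ℝ)*q - 1 := by nlinarith
  have key2 : x * ((t:ℝ)*q - 1) < t * p := by
    rcases eq_or_lt_of_le (by linarith : (0:ℝ) ≤ (t:ℝ)*q - 1) with h0 | h0
    · rw [← h0, mul_zero]; positivity
    · have hA := mul_lt_mul_of_pos_right hx2 h0
      have hTP := mul_le_mul_of_nonneg_right ht3' hp'.le
      have hB : 3*(p:ℝ)^2 * ((t:ℝ)*q - 1) ≤ (t:ℝ)*p*(3*p*q-1) := by nlinarith
      have hC : x * ((t:ℝ)*q - 1) * (3*(p:ℝ)*q-1) < (t:ℝ)*p*(3*p*q-1) := by nlinarith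
      exact lt_of_mul_lt_mul_right hC h3pq.le
  have h4 : (c:ℝ) - 1 < (t:ℝ)/x := by
    rw [lt_div_iff₀ hx0]
    nlinarith [mul_le_mul_of_nonneg_right h3' hx0.le]
  have hlo : c - 1 < ⌈(t:ℝ)/x⌉ := Int.lt_ceil.mpr (by push_cast; linarith)
  omega

/-- If `p > q ≥ 1`, `gcd(p,q) = 1` and `gcd(3, p+q) = 1`, then for all `x` slightly
greater than `p/q`: (i) `⌈3p/x⌉ = 3q`, so that `3(p+q) = 3p + ⌈3p/x⌉`, and (ii) there
is no decomposition of `(p+q, 3p)` relative to `x`. -/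
theorem stab_triple_three_coprime (p q : ℕ) (hq : 0 < q) (hpq : q < p)
    (hgcd : Nat.gcd p q = 1) (hgcd3 : Nat.gcd 3 (p + q) = 1) :
    ∃ ε₀ > (0 : ℝ), ∀ x : ℝ, (p : ℝ) / q < x → x < (p : ℝ) / q + ε₀ →
      (⌈(3 * p : ℝ) / x⌉ = (3 * q : ℤ) ∧
        (3 * (p + q) : ℤ) = (3 * p : ℤ) + ⌈(3 * p : ℝ) / x⌉) ∧
      ¬ HasDecomposition (p + q) (3 * p) x := by
  have hp : 0 < p := lt_trans hq hpq
  have hp' : (0:ℝ) < p := by exact_mod_cast hp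
  have hq' : (0:ℝ) < q := by exact_mod_cast hq
  have hpq1 : (1:ℝ) ≤ (p:ℝ)*q := by
    have h1n : 1 ≤ p*q := Nat.mul_pos hp hq
    exact_mod_cast h1n
  have h3pq : (0:ℝ) < 3*(p:ℝ)*q - 1 := by nlinarith
  refine ⟨(p:ℝ)/((q:ℝ)*(3*(p:ℝ)*q - 1)), by positivity, ?_⟩
  intro x hx1 hx2
  have hx0 : 0 < x := lt_trans (div_pos hp' hq') hx1
  have hx2' : x * (3*(p:ℝ)*q - 1) < 3*(p:ℝ)^2 := by
    have h := mul_lt_mul_of_pos_right hx2 h3pq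
    have heq : ((p:ℝ)/q + (p:ℝ)/((q:ℝ)*(3*(p:ℝ)*q - 1))) * (3*(p:ℝ)*q - 1)
        = 3*(p:ℝ)^2 := by
      have hne := h3pq.ne'
      have hqne := hq'.ne'
      rw [div_add_div _ _ hqne (mul_ne_zero hqne hne), div_mul_eq_mul_div,
        div_eq_iff (mul_ne_zero hqne (mul_ne_zero hqne hne))]
      ring
    linarith
  -- the key ceiling computation for every relevant t
  have hceil : ∀ t : ℕ, 0 < t → t ≤ 3*p → ⌈(t:ℝ)/x⌉ = ⌈(t:ℝ)*q/p⌉ :=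
    fun t ht ht3 => ceil_div_eq_aux p q t hp hq hx1 hx2' ht ht3
  have hTP : ⌈(3*(p:ℝ))/x⌉ = 3*q := by
    have h := hceil (3*p) (by omega) le_rfl
    push_cast at h
    rw [h]
    have h2 : 3*(p:ℝ)*q/p = ((3*q : ℤ) : ℝ) := by
      push_cast
      field_simp
    rw [h2, Int.ceil_intCast]
  constructor
  · constructor
    · exact_mod_cast hTP
    · have : ⌈(3 * (p:ℝ)) / x⌉ = (3*q : ℤ) := hTP
      push_cast
      rw [this]
      push_cast
      ring
  -- part (ii)
  rintro ⟨n, hn, ms, ts, hms, hts, hsm, hst, heqn⟩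
  have htsle : ∀ i, ts i ≤ 3*p := by
    intro i
    calc ts i ≤ ∑ j, ts j := Finset.single_le_sum (fun j _ => Nat.zero_le _) (Finset.mem_univ i)
    _ = 3*p := hst
  set c : Fin n → ℤ := fun i => ⌈(ts i:ℝ)*q/p⌉ with hcdef
  have heqc : ∀ i, (3 * ms i : ℤ) = (ts i : ℤ) + c i := by
    intro i
    rw [heqn i, hceil (ts i) (hts i) (htsle i)]
  -- sums
  have hA : (∑ i, (ms i:ℤ)) = (p:ℤ) + q := by exact_mod_cast hsm
  have hB : (∑ i, (ts i:ℤ)) = 3*(p:ℤ) := by exact_mod_cast hst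
  have hsumc : ∑ i, c i = 3*(q:ℤ) := by
    have h1 : ∑ i, (3 * (ms i:ℤ)) = ∑ i, ((ts i:ℤ) + c i) :=
      Finset.sum_congr rfl (fun i _ => heqc i)
    rw [← Finset.mul_sum, Finset.sum_add_distrib, hA, hB] at h1
    linarith
  -- each ceiling is exact
  have hexact : ∀ i, (p:ℤ) * c i = (ts i:ℤ) * q := by
    have hsr : ∑ i, ((ts i:ℝ)*q/p) = 3*(q:ℝ) := by
      rw [← Finset.sum_div, ← Finset.sum_mul]
      have h : ∑ i, ((ts i):ℝ) = 3*(p:ℝ) := by exact_mod_cast hst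
      rw [h]
      field_simp
    have hcr : ∑ i, ((c i:ℤ):ℝ) = 3*(q:ℝ) := by exact_mod_cast hsumc
    have hz := (Finset.sum_eq_zero_iff_of_nonneg
      (fun i _ => sub_nonneg.mpr (Int.le_ceil ((ts i:ℝ)*q/p)))).mp
      (by rw [Finset.sum_sub_distrib, hcr, hsr, sub_self] :
        ∑ i, (((c i:ℤ):ℝ) - (ts i:ℝ)*q/p) = 0)
    intro i
    have hzi := sub_eq_zero.mp (hz i (Finset.mem_univ i))
    have : (p:ℝ) * (c i:ℤ) = (ts i:ℝ) * q := by
      rw [hzi]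
      field_simp
    exact_mod_cast this
  -- every ts i is at least 3p
  have htsge : ∀ i, 3*p ≤ ts i := by
    intro i
    have hdvd : p ∣ ts i * q := by
      have : (p:ℤ) ∣ (ts i:ℤ) * q := ⟨c i, (hexact i).symm⟩
      exact_mod_cast this
    obtain ⟨k, hk⟩ := (Nat.Coprime.dvd_of_dvd_mul_right hgcd hdvd)
    have hk0 : 0 < k := by
      rcases Nat.eq_zero_or_pos k with h0 | h0
      · subst h0; rw [mul_zero] at hk; have := hts i; omega
      · exact h0
    have hci : c i = (k:ℤ) * q := by
      have h := hexact i
      rw [hk] at h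
      push_cast at h
      have := mul_left_cancel₀ (by exact_mod_cast hp.ne' : (p:ℤ) ≠ 0)
        (by linarith : (p:ℤ) * c i = (p:ℤ) * ((k:ℤ) * q))
      exact this
    have h3m : (3 * ms i : ℤ) = (k:ℤ) * ((p:ℤ) + q) := by
      rw [heqc i, hci, hk]
      push_cast
      ring
    have h3m' : 3 * ms i = k * (p + q) := by exact_mod_cast h3m
    have hdvd3 : (3:ℕ) ∣ k * (p+q) := ⟨ms i, h3m'.symm⟩
    have h3k : (3:ℕ) ∣ k := Nat.Coprime.dvd_of_dvd_mul_right hgcd3 hdvd3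
    have hk3 : 3 ≤ k := Nat.le_of_dvd hk0 h3k
    calc 3*p ≤ p * k := by nlinarith
    _ = ts i := hk.symm
  -- contradiction: two parts each ≥ 3p but total is 3p
  have h01 : (⟨0, by omega⟩ : Fin n) ≠ (⟨1, by omega⟩ : Fin n) := by
    simp [Fin.ext_iff]
  have hsub : ({(⟨0, by omega⟩ : Fin n), (⟨1, by omega⟩ : Fin n)} : Finset (Fin n))
      ⊆ Finset.univ := Finset.subset_univ _
  have hle := Finset.sum_le_sum_of_subset (f := ts) hsub
  rw [Finset.sum_pair h01, hst] at hle
  have h0 := htsge ⟨0, by omega⟩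
  have h1 := htsge ⟨1, by omega⟩
  omega
end

section
/- Let p and q be positive integers with p > q, 3 ∣ p+q, and gcd(p,q) ∉ {1,3}. Then there exists an integer n > 1 with n ∣ p, n ∣ q and 3n ∣ p+q; consequently m' = (p+q)/(3n) and t' = p/n are positive integers, and there exists ε₀ > 0 such that for every real x with p/q < x < p/q + ε₀ one has 3m' = t' + ⌈t'/x⌉, so that taking n equal terms (m_i, t_i) = (m', t') yields a decomposition of ((p+q)/3, p) relative to x. -/
/-- If `p > q ≥ 1`, `3 ∣ p+q`, and `gcd(p,q) ∉ {1,3}`, then there is an integer `n > 1`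
with `n ∣ p`, `n ∣ q` and `3n ∣ p+q`; consequently `m' = (p+q)/(3n)` and `t' = p/n` are
positive integers, and for all `x` slightly greater than `p/q` one has
`3m' = t' + ⌈t'/x⌉`, so that `n` equal terms `(m', t')` yield a decomposition of
`((p+q)/3, p)` relative to `x`. -/
theorem decomposition_exists_of_gcd (p q : ℕ) (hq : 0 < q) (hpq : q < p)
    (hdvd : 3 ∣ p + q) (hgcd1 : Nat.gcd p q ≠ 1) (hgcd3 : Nat.gcd p q ≠ 3) :
    ∃ n : ℕ, 1 < n ∧ n ∣ p ∧ n ∣ q ∧ 3 * n ∣ p + q ∧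
      0 < (p + q) / (3 * n) ∧ 0 < p / n ∧
      ∃ ε₀ > (0 : ℝ), ∀ x : ℝ, (p : ℝ) / q < x → x < (p : ℝ) / q + ε₀ →
        (3 * ((p + q) / (3 * n) : ℕ) : ℤ)
            = ((p / n : ℕ) : ℤ) + ⌈((p / n : ℕ) : ℝ) / x⌉ ∧
        HasDecomposition ((p + q) / 3) p x := by
  have hp : 0 < p := lt_trans hq hpq
  have hg0 : 0 < Nat.gcd p q := Nat.gcd_pos_of_pos_left q hp
  have hgpq : Nat.gcd p q ∣ p + q := dvd_add (Nat.gcd_dvd_left p q) (Nat.gcd_dvd_right p q)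
  obtain ⟨n, hn1, hnp, hnqd, hn3⟩ : ∃ n, 1 < n ∧ n ∣ p ∧ n ∣ q ∧ 3 * n ∣ p + q := by
    by_cases h3 : 3 ∣ Nat.gcd p q
    · obtain ⟨k, hk⟩ := h3
      refine ⟨k, by omega, dvd_trans ⟨3, by omega⟩ (Nat.gcd_dvd_left p q),
        dvd_trans ⟨3, by omega⟩ (Nat.gcd_dvd_right p q), ?_⟩
      rw [← hk]; exact hgpq
    · exact ⟨Nat.gcd p q, by omega, Nat.gcd_dvd_left p q, Nat.gcd_dvd_right p q,
        Nat.Coprime.mul_dvd_of_dvd_of_dvd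
          ((Nat.Prime.coprime_iff_not_dvd Nat.prime_three).mpr h3) hdvd hgpq⟩
  have hn0 : 0 < n := by omega
  set m' := (p + q) / (3 * n) with hm'
  set t' := p / n with ht'
  set b := q / n with hb'
  have hm3 : 3 * m' * n = p + q := by
    have h := Nat.div_mul_cancel hn3
    calc 3 * m' * n = m' * (3 * n) := by ring
    _ = p + q := h
  have ht : t' * n = p := Nat.div_mul_cancel hnp
  have hbq : b * n = q := Nat.div_mul_cancel hnqd
  have hm0 : 0 < m' := by
    rcases Nat.eq_zero_or_pos m' with h | h
    · rw [h] at hm3; simp at hm3; omega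
    · exact h
  have ht0 : 0 < t' := by
    rcases Nat.eq_zero_or_pos t' with h | h
    · rw [h] at ht; simp at ht; omega
    · exact h
  have hb0 : 0 < b := by
    rcases Nat.eq_zero_or_pos b with h | h
    · rw [h] at hbq; simp at hbq; omega
    · exact h
  have hsum : 3 * m' = t' + b :=
    Nat.eq_of_mul_eq_mul_right hn0 (by rw [hm3, add_mul, ht, hbq])
  have hnq : n ≤ q := Nat.le_of_dvd hq hnqd
  -- real facts
  have hqr : (0 : ℝ) < q := by exact_mod_cast hq
  have hpr : (0 : ℝ) < p := by exact_mod_cast hp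
  have hnr : (0 : ℝ) < n := by exact_mod_cast hn0
  have hT : (t' : ℝ) * n = p := by exact_mod_cast ht
  have hB : (b : ℝ) * n = q := by exact_mod_cast hbq
  have hT0 : (0 : ℝ) < t' := by exact_mod_cast ht0
  have hB0 : (0 : ℝ) < b := by exact_mod_cast hb0
  have hPQ : (0 : ℝ) < (p : ℝ) / q := by positivity
  set ε₀ : ℝ := if n = q then 1 else (p : ℝ) / ((q : ℝ) - n) - (p : ℝ) / q with hε₀
  have hε : 0 < ε₀ := by
    rw [hε₀]
    split_ifs with h
    · norm_num
    · have hlt : n < q := lt_of_le_of_ne hnq h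
      have hqn : (0 : ℝ) < (q : ℝ) - n := by
        have : (n : ℝ) < q := by exact_mod_cast hlt
        linarith
      have : (p : ℝ) / q < (p : ℝ) / ((q : ℝ) - n) := by
        apply div_lt_div_of_pos_left hpr hqn
        linarith
      linarith
  have key : ∀ x : ℝ, (p : ℝ) / q < x → x < (p : ℝ) / q + ε₀ → ⌈(t' : ℝ) / x⌉ = (b : ℤ) := by
    intro x hx1 hx2
    have hx0 : 0 < x := lt_trans hPQ hx1
    have hPQx : (p : ℝ) < q * x := by
      rw [div_lt_iff₀ hqr] at hx1; linarith [hx1]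
    rw [Int.ceil_eq_iff]
    push_cast
    constructor
    · -- (b:ℝ) - 1 < t'/x
      rw [lt_div_iff₀ hx0]
      by_cases h : n = q
      · have hb1 : b = 1 := by
          have h2 : b * n = 1 * n := by rw [one_mul, hbq, h]
          exact Nat.eq_of_mul_eq_mul_right hn0 h2
        rw [hb1]
        push_cast
        simpa using hT0
      · have hlt : n < q := lt_of_le_of_ne hnq h
        have hqn : (0 : ℝ) < (q : ℝ) - n := by
          have : (n : ℝ) < q := by exact_mod_cast hlt
          linarith
        have hx2' : x * ((q : ℝ) - n) < p := by
          have hxlt : x < (p : ℝ) / ((q : ℝ) - n) := by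
            have : ε₀ = (p : ℝ) / ((q : ℝ) - n) - (p : ℝ) / q := by
              rw [hε₀]; simp [h]
            linarith [hx2, this]
          rw [lt_div_iff₀ hqn] at hxlt
          linarith
        nlinarith [hx2', hT, hB, hnr, hx0]
    · -- t'/x ≤ b
      rw [div_le_iff₀ hx0]
      nlinarith [mul_pos hB0 (sub_pos.mpr hPQx), hqr]
  refine ⟨n, hn1, hnp, hnqd, hn3, hm0, ht0, ε₀, hε, ?_⟩
  intro x hx1 hx2
  have hceil := key x hx1 hx2
  have heq : (3 * m' : ℤ) = (t' : ℤ) + ⌈(t' : ℝ) / x⌉ := by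
    rw [hceil]; exact_mod_cast hsum
  refine ⟨heq, n, by omega, fun _ => m', fun _ => t', fun _ => hm0, fun _ => ht0, ?_, ?_, fun i => heq⟩
  · rw [Finset.sum_const, Finset.card_univ, Fintype.card_fin, smul_eq_mul]
    have h1 : p + q = 3 * (n * m') := by rw [← hm3]; ring
    rw [h1, Nat.mul_div_cancel_left _ (by norm_num)]
  · rw [Finset.sum_const, Finset.card_univ, Fintype.card_fin, smul_eq_mul, mul_comm, ht]
end
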